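/- arXiv:2512.09091 — 3 statements merged into one kernel-verified Lean document; each statement's English description precedes it below -/
import Mathlib

section
/- Let ℋ be a complex Hilbert space, X = 𝓑(ℋ), 1 ≤ q ≤ ∞, and let f ∈ 𝓟𝓗(B_{ℓ^n_q}, X) have the expansion f(z) = Σ_{m=0}^∞ Σ_{|α|=m} a_α z^α + Σ_{m=1}^∞ Σ_{|α|=m} b_α* z̄^α. Then for every multi-index α with |α| = m ≥ 1, with ρ_α := (|α|^{|α|}/α^α)^{1/q}, one has ‖a_α + b_α‖ ≤ (4/π) · ρ_α · ‖Σ_{|β|=m}(a_β + b_β) z^β‖_{B_{ℓ^n_q},X} and ‖a_α − b_α‖ ≤ (4/π) · ρ_α · ‖Σ_{|β|=m}(a_β − b_β) z^β‖_{B_{ℓ^n_q},X}. -/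
open scoped BigOperators ENNReal ComplexConjugate Pointwise

noncomputable section

open Classical in
/-- The `ℓ^q` norm on `ℂⁿ`, for `q ∈ [1,∞]` (`q = ∞` giving the sup norm). -/
def lqNorm (n : ℕ) (q : ℝ≥0∞) (z : Fin n → ℂ) : ℝ :=
  if q = ∞ then ⨆ i, ‖z i‖ else (∑ i, ‖z i‖ ^ q.toReal) ^ (1 / q.toReal)

/-- The open unit ball of `ℓ^q_n`. -/
def lqBall (n : ℕ) (q : ℝ≥0∞) : Set (Fin n → ℂ) := {z | lqNorm n q z < 1}

/-- The `ℓ^p` norm on `ℂⁿ` with a real exponent `p ∈ [1,∞)`. -/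
def lpNormR (n : ℕ) (p : ℝ) (z : Fin n → ℂ) : ℝ := (∑ i, ‖z i‖ ^ p) ^ (1 / p)

/-- A norm on `ℂⁿ` for which the canonical basis vectors form a normalized
1-unconditional basis.  Its open unit ball is a bounded convex complete Reinhardt domain. -/
structure ReinhardtNorm (n : ℕ) where
  N : (Fin n → ℂ) → ℝ
  add_le : ∀ z w, N (z + w) ≤ N z + N w
  smul_eq : ∀ (c : ℂ) (z), N (c • z) = ‖c‖ * N z
  eq_zero : ∀ z, N z = 0 → z = 0
  mono : ∀ z w : Fin n → ℂ, (∀ i, ‖z i‖ ≤ ‖w i‖) → N z ≤ N w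
  normalized : ∀ i, N (Pi.single i 1) = 1

/-- The open unit ball `B_Z`. -/
def ReinhardtNorm.ball {n : ℕ} (Z : ReinhardtNorm n) : Set (Fin n → ℂ) := {z | Z.N z < 1}

/-- `‖f‖_{Ω,X} = sup_{z ∈ Ω} ‖f z‖`. -/
def supNormOn {n : ℕ} {X : Type*} [Norm X] (Ω : Set (Fin n → ℂ)) (f : (Fin n → ℂ) → X) : ℝ :=
  sSup ((fun z => ‖f z‖) '' Ω)

/-- A complete Reinhardt domain in `ℂⁿ`. -/
def IsCompleteReinhardt {n : ℕ} (Ω : Set (Fin n → ℂ)) : Prop :=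
  IsOpen Ω ∧ IsConnected Ω ∧ (0 : Fin n → ℂ) ∈ Ω ∧
    ∀ z ∈ Ω, ∀ w : Fin n → ℂ, (∀ j, ‖w j‖ ≤ ‖z j‖) → w ∈ Ω

/-- `S(Ω₁,Ω₂) = inf {s > 0 : Ω₁ ⊆ s Ω₂}`. -/
def domRatio {n : ℕ} (Ω₁ Ω₂ : Set (Fin n → ℂ)) : ℝ :=
  sInf {s : ℝ | 0 < s ∧ Ω₁ ⊆ s • Ω₂}

/-- The operator norm of the identity of `ℂⁿ` from the norm `N₁` to the norm `N₂`. -/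
def idNorm {n : ℕ} (N₁ N₂ : (Fin n → ℂ) → ℝ) : ℝ := sSup (N₂ '' {z | N₁ z ≤ 1})

/-- The dual norm `‖∑ e_k*‖` of the sum of the coordinate functionals. -/
def dualSumNorm {n : ℕ} (N : (Fin n → ℂ) → ℝ) : ℝ :=
  sSup ((fun z => ‖∑ i, z i‖) '' {z | N z ≤ 1})

section PH

variable {H : Type*} [NormedAddCommGroup H] [InnerProductSpace ℂ H] [CompleteSpace H]
variable {Y : Type*} [NormedAddCommGroup Y] [NormedSpace ℂ Y]

/-- `f` is a pluriharmonic function on `Ω` with values in `𝓑(ℋ)`, with coefficient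
families `a`, `b` : `f z = ∑ a_α z^α + ∑ b_α* conj(z)^α`, `b₀ = 0`. -/
def IsPHRep {n : ℕ} (Ω : Set (Fin n → ℂ)) (f : (Fin n → ℂ) → H →L[ℂ] H)
    (a b : (Fin n → ℕ) → H →L[ℂ] H) : Prop :=
  ContinuousOn f Ω ∧ b 0 = 0 ∧
    ∀ z ∈ Ω, HasSum (fun α : Fin n → ℕ =>
      (∏ i, z i ^ α i) • a α + (∏ i, conj (z i) ^ α i) • star (b α)) (f z)

/-- The `λ`-powered Bohr radius `R_λ(Ω, p, U)` for `𝓑(ℋ)`-valued pluriharmonic functions. -/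
def bohrR {n : ℕ} (Ω : Set (Fin n → ℂ)) (p lam : ℝ) (U : (H →L[ℂ] H) →L[ℂ] Y) : ℝ :=
  sSup {r : ℝ | 0 ≤ r ∧
    ∀ (f : (Fin n → ℂ) → H →L[ℂ] H) (a b : (Fin n → ℕ) → H →L[ℂ] H),
      IsPHRep Ω f a b → BddAbove ((fun z => ‖f z‖) '' Ω) →
      ∀ z ∈ Ω, ∀ F : Finset (Fin n → ℕ),
        ∑ α ∈ F, (‖U (a α)‖ ^ p + ‖U (b α)‖ ^ p) * ‖∏ i, (r • z) i ^ α i‖ ^ p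
          ≤ lam ^ p * supNormOn Ω f ^ p}

/-- The `m`-homogeneous pluriharmonic polynomial with coefficients `a`, `b`. -/
def homPH {n : ℕ} (a b : (Fin n → ℕ) → H →L[ℂ] H) (z : Fin n → ℂ) : H →L[ℂ] H :=
  ∑' α : Fin n → ℕ, ((∏ i, z i ^ α i) • a α + (∏ i, conj (z i) ^ α i) • star (b α))

/-- The homogeneous Bohr radius `R^m_μ(Ω, p, U)` for `m`-homogeneous pluriharmonic
polynomials. -/
def bohrRHom {n : ℕ} (m : ℕ) (Ω : Set (Fin n → ℂ)) (p mu : ℝ)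
    (U : (H →L[ℂ] H) →L[ℂ] Y) : ℝ :=
  sSup {r : ℝ | 0 ≤ r ∧
    ∀ a b : (Fin n → ℕ) → H →L[ℂ] H,
      (∀ α, (∑ i, α i) ≠ m → a α = 0) → (∀ α, (∑ i, α i) ≠ m → b α = 0) →
      ∀ z ∈ Ω, ∀ F : Finset (Fin n → ℕ),
        ∑ α ∈ F, (‖U (a α)‖ ^ p + ‖U (b α)‖ ^ p) * ‖∏ i, (r • z) i ^ α i‖ ^ p
          ≤ mu ^ p * supNormOn Ω (homPH a b) ^ p}

end PH

section Hol

variable {X : Type*} [NormedAddCommGroup X] [NormedSpace ℂ X]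
variable {Y : Type*} [NormedAddCommGroup Y] [NormedSpace ℂ Y]

/-- `f` is a holomorphic function on `Ω` with monomial coefficient family `a`. -/
def IsHolRep {n : ℕ} (Ω : Set (Fin n → ℂ)) (f : (Fin n → ℂ) → X)
    (a : (Fin n → ℕ) → X) : Prop :=
  ∀ z ∈ Ω, HasSum (fun α : Fin n → ℕ => (∏ i, z i ^ α i) • a α) (f z)

/-- The `λ`-powered Bohr radius `K_λ(Ω, p, U)` for `X`-valued holomorphic functions. -/
def bohrK {n : ℕ} (Ω : Set (Fin n → ℂ)) (p lam : ℝ) (U : X →L[ℂ] Y) : ℝ :=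
  sSup {r : ℝ | 0 ≤ r ∧
    ∀ (f : (Fin n → ℂ) → X) (a : (Fin n → ℕ) → X),
      IsHolRep Ω f a → BddAbove ((fun z => ‖f z‖) '' Ω) →
      ∀ z ∈ Ω, ∀ F : Finset (Fin n → ℕ),
        ∑ α ∈ F, ‖U (a α)‖ ^ p * ‖∏ i, (r • z) i ^ α i‖ ^ p
          ≤ lam ^ p * supNormOn Ω f ^ p}

/-- The `m`-homogeneous holomorphic polynomial with coefficients `a`. -/
def homHol {n : ℕ} (a : (Fin n → ℕ) → X) (z : Fin n → ℂ) : X :=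
  ∑' α : Fin n → ℕ, (∏ i, z i ^ α i) • a α

/-- The homogeneous Bohr radius `K^m_μ(Ω, p, U)` for `m`-homogeneous holomorphic
polynomials. -/
def bohrKHom {n : ℕ} (m : ℕ) (Ω : Set (Fin n → ℂ)) (p mu : ℝ) (U : X →L[ℂ] Y) : ℝ :=
  sSup {r : ℝ | 0 ≤ r ∧
    ∀ a : (Fin n → ℕ) → X, (∀ α, (∑ i, α i) ≠ m → a α = 0) →
      ∀ z ∈ Ω, ∀ F : Finset (Fin n → ℕ),
        ∑ α ∈ F, ‖U (a α)‖ ^ p * ‖∏ i, (r • z) i ^ α i‖ ^ p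
          ≤ mu ^ p * supNormOn Ω (homHol a) ^ p}

end Hol

/-- `W` has cotype `t`: via the equivalent averaged-signs formulation of the
Rademacher average. -/
def HasCotype (W : Type*) [NormedAddCommGroup W] (t : ℝ) : Prop :=
  ∃ C : ℝ, 0 < C ∧ ∀ (k : ℕ) (w : Fin k → W),
    (∑ j, ‖w j‖ ^ t) ^ (1 / t) ≤
      C * ((∑ ε : Fin k → Bool, ‖∑ j, if ε j then w j else -w j‖ ^ (2 : ℝ)) / 2 ^ k)
        ^ ((1 : ℝ) / 2)

/-- `Cot(W) = inf {2 ≤ t < ∞ : W has cotype t}`, equal to `∞` if `W` has no finite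
cotype. -/
def cotype (W : Type*) [NormedAddCommGroup W] : ℝ≥0∞ :=
  sInf {t : ℝ≥0∞ | ∃ s : ℝ, t = ENNReal.ofReal s ∧ 2 ≤ s ∧ HasCotype W s}

open Classical in
/-- The lower-bound quantity `Ψ₁(n,λ,p,q)` of the infinite-dimensional theorem,
with constants `E₅`, `E₆`, cotype `cot = Cot(X)` and a finite cotype `t` of `X`. -/
def Psi1 (E₅ E₆ : ℝ) (cot : ℝ≥0∞) (t : ℝ) (n : ℕ) (lam p : ℝ) (q : ℝ≥0∞) : ℝ :=
  if min cot q < ENNReal.ofReal p then E₅ * ((lam ^ p - 1) ^ (1 / p) / lam)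
  else E₆ * ((lam ^ p - 1) ^ (1 / p) / lam) *
    (n : ℝ) ^ (1 / (min (ENNReal.ofReal t) q).toReal - 1 / p)

open Classical in
/-- The upper-bound quantity `Ψ₂(n,λ,p,q)` of the infinite-dimensional theorem. -/
def Psi2 (cot : ℝ≥0∞) (n : ℕ) (lam p : ℝ) (q : ℝ≥0∞) : ℝ :=
  if q ≤ cot then 2 * lam * (n : ℝ) ^ (1 / q.toReal - 1 / p)
  else 2 * lam * (n : ℝ) ^ (cot⁻¹.toReal - 1 / p)

/-- A Banach sequence space (`ℓ₁ ⊆ Z ⊆ c₀` with the canonical vectors a normalized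
1-unconditional basis), recorded through the induced norms on the finite sections
`Z_n = span{e₁,…,e_n}`. -/
structure BanachSeqNorm where
  N : ∀ n : ℕ, (Fin n → ℂ) → ℝ
  compat : ∀ (n : ℕ) (z : Fin n → ℂ), N (n + 1) (Fin.snoc z 0) = N n z
  add_le : ∀ (n : ℕ) (z w : Fin n → ℂ), N n (z + w) ≤ N n z + N n w
  smul_eq : ∀ (n : ℕ) (c : ℂ) (z : Fin n → ℂ), N n (c • z) = ‖c‖ * N n z
  eq_zero : ∀ (n : ℕ) (z : Fin n → ℂ), N n z = 0 → z = 0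
  mono : ∀ (n : ℕ) (z w : Fin n → ℂ), (∀ i, ‖z i‖ ≤ ‖w i‖) → N n z ≤ N n w
  normalized : ∀ (n : ℕ) (i : Fin n), N n (Pi.single i 1) = 1

/-- The open unit ball `B_{Z_n}`. -/
def BanachSeqNorm.ball (S : BanachSeqNorm) (n : ℕ) : Set (Fin n → ℂ) := {z | S.N n z < 1}

/-- `Z` is symmetric: the norm is invariant under permutations of the coordinates. -/
def BanachSeqNorm.Symm (S : BanachSeqNorm) : Prop :=
  ∀ (n : ℕ) (σ : Equiv.Perm (Fin n)) (z : Fin n → ℂ), S.N n (z ∘ σ) = S.N n z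

/-- `Z` is 2-convex. -/
def BanachSeqNorm.TwoConvex (S : BanachSeqNorm) : Prop :=
  ∃ C : ℝ, 0 < C ∧ ∀ (n m : ℕ) (x : Fin m → Fin n → ℂ),
    S.N n (fun i => (Real.sqrt (∑ k, ‖x k i‖ ^ 2) : ℂ)) ≤
      C * Real.sqrt (∑ k, S.N n (x k) ^ 2)

open Classical in
/-- The exponent `(p-1)/(p(q-1))`, interpreted as `0` when `q = ∞`. -/
def qexp1 (p : ℝ) (q : ℝ≥0∞) : ℝ :=
  if q = ∞ then 0 else (p - 1) / (p * (q.toReal - 1))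

open Classical in
/-- The exponent `(q-p)/(p(q-1))`, interpreted as `1/p` when `q = ∞`. -/
def qexp2 (p : ℝ) (q : ℝ≥0∞) : ℝ :=
  if q = ∞ then 1 / p else (q.toReal - p) / (p * (q.toReal - 1))

/-- The mixed Minkowski norm of `ℓ^m_s(ℓ^n_t)` on `ℂ^{mn}`. -/
def mixedNorm (m n : ℕ) (s t : ℝ≥0∞) (z : Fin (m * n) → ℂ) : ℝ :=
  lqNorm m s (fun k => lqNorm n t (fun j => z (finProdFinEquiv (k, j))))

/-- The open unit ball of the mixed Minkowski space `ℓ^m_s(ℓ^n_t)`. -/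
def mixedBall (m n : ℕ) (s t : ℝ≥0∞) : Set (Fin (m * n) → ℂ) :=
  {z | mixedNorm m n s t z < 1}

end

section AuxCB

open Finset

private lemma auxCB_root_sum (N : ℕ) (x : ℂ) (hx : x ^ N = 1) :
    ∑ k : Fin N, x ^ (k : ℕ) = if x = 1 then (N : ℂ) else 0 := by
  rw [Fin.sum_univ_eq_sum_range (fun i => x ^ i) N]
  split_ifs with h
  · simp [h]
  · rw [geom_sum_eq h, hx]; simp

private def auxCB_T (n m : ℕ) : Finset (Fin n → ℕ) :=
  (Fintype.piFinset fun _ => Finset.range (m + 1)).filter fun β => ∑ i, β i = m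

private lemma auxCB_mem_T {n m : ℕ} {α : Fin n → ℕ} (hα : ∑ i, α i = m) :
    α ∈ auxCB_T n m := by
  refine Finset.mem_filter.mpr ⟨Fintype.mem_piFinset.mpr fun i => Finset.mem_range.mpr ?_, hα⟩
  have : α i ≤ ∑ j, α j := Finset.single_le_sum (fun j _ => Nat.zero_le _) (Finset.mem_univ i)
  omega

private lemma auxCB_tsum_eq {E : Type*} [NormedAddCommGroup E] [NormedSpace ℂ E]
    {n m : ℕ} (c : (Fin n → ℕ) → E) (z : Fin n → ℂ) :
    (∑' β : Fin n → ℕ, if (∑ i, β i) = m then (∏ i, z i ^ β i) • c β else 0)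
      = ∑ β ∈ auxCB_T n m, (∏ i, z i ^ β i) • c β := by
  rw [tsum_eq_sum (s := auxCB_T n m) (fun β hβ => if_neg (fun hc => hβ (auxCB_mem_T hc)))]
  exact Finset.sum_congr rfl fun β hβ => if_pos (Finset.mem_filter.mp hβ).2

private lemma auxCB_norm_le {n : ℕ} {q : ℝ≥0∞} (hq : 1 ≤ q) {z : Fin n → ℂ}
    (hz : z ∈ lqBall n q) (i : Fin n) : ‖z i‖ ≤ 1 := by
  by_contra hcon
  push_neg at hcon
  simp only [lqBall, lqNorm, Set.mem_setOf_eq] at hz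
  split_ifs at hz with hqi
  · have : ‖z i‖ ≤ ⨆ j, ‖z j‖ :=
      le_ciSup (f := fun j => ‖z j‖) (Set.Finite.bddAbove (Set.finite_range _)) i
    linarith
  · have hqt : 1 ≤ q.toReal := by
      have := ENNReal.toReal_mono hqi hq
      simpa using this
    have h1 : (1 : ℝ) ≤ ‖z i‖ ^ q.toReal := by
      calc (1:ℝ) = 1 ^ q.toReal := (Real.one_rpow _).symm
        _ ≤ ‖z i‖ ^ q.toReal := Real.rpow_le_rpow zero_le_one hcon.le (by linarith)
    have h2 : ‖z i‖ ^ q.toReal ≤ ∑ j, ‖z j‖ ^ q.toReal :=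
      Finset.single_le_sum (fun j _ => Real.rpow_nonneg (norm_nonneg _) _) (Finset.mem_univ i)
    have h3 : (1 : ℝ) ≤ (∑ j, ‖z j‖ ^ q.toReal) ^ (1 / q.toReal) := by
      calc (1:ℝ) = 1 ^ (1 / q.toReal) := (Real.one_rpow _).symm
        _ ≤ _ := Real.rpow_le_rpow zero_le_one (by linarith) (by positivity)
    linarith

private lemma auxCB_lqNorm_congr {n : ℕ} (q : ℝ≥0∞) {z w : Fin n → ℂ}
    (h : ∀ i, ‖z i‖ = ‖w i‖) : lqNorm n q z = lqNorm n q w := by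
  simp only [lqNorm, h]

set_option maxHeartbeats 1000000 in
private lemma auxCB_avg {E : Type*} [NormedAddCommGroup E] [NormedSpace ℂ E]
    {n N : ℕ} (hN : 0 < N) {ω : ℂ} (hωN : ω ^ N = 1)
    (hdvd : ∀ d : ℤ, ω ^ d = 1 ↔ (N : ℤ) ∣ d)
    {T : Finset (Fin n → ℕ)} (hT : ∀ β ∈ T, ∀ j, β j < N)
    (c : (Fin n → ℕ) → E) (w : Fin n → ℂ) {α : Fin n → ℕ} (hαT : α ∈ T) :
    ∑ k ∈ Fintype.piFinset (fun _ : Fin n => (Finset.univ : Finset (Fin N))),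
      (∏ j, ω ^ (-((k j : ℤ) * (α j : ℤ)))) •
        (∑ β ∈ T, (∏ j, (ω ^ (k j : ℕ) * w j) ^ β j) • c β)
      = ((N : ℂ) ^ n) • ((∏ j, w j ^ α j) • c α) := by
  have hω0 : ω ≠ 0 := by
    intro h
    rw [h, zero_pow hN.ne'] at hωN
    exact zero_ne_one hωN
  have key : ∀ β ∈ T,
      (∑ k ∈ Fintype.piFinset (fun _ : Fin n => (Finset.univ : Finset (Fin N))),
        ∏ j, ω ^ ((k j : ℤ) * ((β j : ℤ) - (α j : ℤ))))
        = if β = α then ((N : ℂ)) ^ n else 0 := by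
    intro β hβ
    rw [show (∑ k ∈ Fintype.piFinset (fun _ : Fin n => (Finset.univ : Finset (Fin N))),
        ∏ j, ω ^ ((k j : ℤ) * ((β j : ℤ) - (α j : ℤ))))
      = ∏ j, ∑ t : Fin N, ω ^ ((t : ℤ) * ((β j : ℤ) - (α j : ℤ))) from
      (Finset.prod_univ_sum (fun _ : Fin n => (Finset.univ : Finset (Fin N)))
        (fun j t => ω ^ ((t : ℤ) * ((β j : ℤ) - (α j : ℤ))))).symm]
    have hfac : ∀ j : Fin n,
        (∑ t : Fin N, ω ^ ((t : ℤ) * ((β j : ℤ) - (α j : ℤ))))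
          = if β j = α j then (N : ℂ) else 0 := by
      intro j
      have h1 : ∀ t : Fin N, ω ^ ((t : ℤ) * ((β j : ℤ) - (α j : ℤ)))
          = (ω ^ ((β j : ℤ) - (α j : ℤ))) ^ (t : ℕ) := by
        intro t
        rw [← zpow_natCast (ω ^ ((β j : ℤ) - (α j : ℤ))) (t : ℕ), ← zpow_mul, mul_comm]
      simp only [h1]
      have hxN : (ω ^ ((β j : ℤ) - (α j : ℤ))) ^ N = 1 := by
        rw [← zpow_natCast (ω ^ ((β j : ℤ) - (α j : ℤ))) N, ← zpow_mul, mul_comm, zpow_mul,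
          zpow_natCast, hωN, one_zpow]
      rw [auxCB_root_sum N _ hxN]
      rcases eq_or_ne (β j) (α j) with h | h
      · have hx : ω ^ ((β j : ℤ) - (α j : ℤ)) = 1 := by rw [h, sub_self, zpow_zero]
        rw [if_pos hx, if_pos h]
      · have hx : ω ^ ((β j : ℤ) - (α j : ℤ)) ≠ 1 := by
          intro hone
          have hd := (hdvd _).mp hone
          have hb := hT β hβ j
          have ha := hT α hαT j
          have h0 : (β j : ℤ) - (α j : ℤ) = 0 :=
            Int.eq_zero_of_abs_lt_dvd hd (by rw [abs_lt]; omega)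
          exact h (by omega)
        rw [if_neg hx, if_neg h]
    calc (∏ j, ∑ t : Fin N, ω ^ ((t : ℤ) * ((β j : ℤ) - (α j : ℤ))))
        = ∏ j, (if β j = α j then (N : ℂ) else 0) :=
          Finset.prod_congr rfl fun j _ => hfac j
      _ = if β = α then ((N : ℂ)) ^ n else 0 := by
          rcases eq_or_ne β α with h | h
          · subst h; simp
          · rw [if_neg h]
            obtain ⟨j, hj⟩ : ∃ j, β j ≠ α j := by
              by_contra hc; push_neg at hc; exact h (funext hc)
            exact Finset.prod_eq_zero (Finset.mem_univ j) (if_neg hj)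
  calc (∑ k ∈ Fintype.piFinset (fun _ : Fin n => (Finset.univ : Finset (Fin N))),
      (∏ j, ω ^ (-((k j : ℤ) * (α j : ℤ)))) •
        (∑ β ∈ T, (∏ j, (ω ^ (k j : ℕ) * w j) ^ β j) • c β))
      = ∑ k ∈ Fintype.piFinset (fun _ : Fin n => (Finset.univ : Finset (Fin N))),
          ∑ β ∈ T, (∏ j, ω ^ ((k j : ℤ) * ((β j : ℤ) - (α j : ℤ)))) •
            ((∏ j, w j ^ β j) • c β) := by
        refine Finset.sum_congr rfl fun k _ => ?_
        rw [Finset.smul_sum]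
        refine Finset.sum_congr rfl fun β _ => ?_
        rw [smul_smul, smul_smul]
        congr 1
        rw [← Finset.prod_mul_distrib, ← Finset.prod_mul_distrib]
        refine Finset.prod_congr rfl fun j _ => ?_
        rw [mul_pow, ← mul_assoc]
        congr 1
        rw [← pow_mul, ← zpow_natCast ω (k j * β j), ← zpow_add₀ hω0]
        congr 1
        push_cast
        ring
    _ = ∑ β ∈ T, ∑ k ∈ Fintype.piFinset (fun _ : Fin n => (Finset.univ : Finset (Fin N))),
          (∏ j, ω ^ ((k j : ℤ) * ((β j : ℤ) - (α j : ℤ)))) •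
            ((∏ j, w j ^ β j) • c β) := Finset.sum_comm
    _ = ∑ β ∈ T, (if β = α then ((N : ℂ)) ^ n else 0) • ((∏ j, w j ^ β j) • c β) := by
        refine Finset.sum_congr rfl fun β hβ => ?_
        rw [← Finset.sum_smul, key β hβ]
    _ = ((N : ℂ) ^ n) • ((∏ j, w j ^ α j) • c α) := by
        rw [Finset.sum_eq_single α]
        · rw [if_pos rfl]
        · intro β _ hne; rw [if_neg hne, zero_smul]
        · intro habs; exact absurd hαT habs

private lemma auxCB_coef_mul_le {E : Type*} [NormedAddCommGroup E] [NormedSpace ℂ E]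
    {n : ℕ} {q : ℝ≥0∞} (hq : 1 ≤ q) {m : ℕ}
    (c : (Fin n → ℕ) → E) {α : Fin n → ℕ} (hα : ∑ i, α i = m)
    {w : Fin n → ℂ} (hw : w ∈ lqBall n q) :
    (∏ j, ‖w j‖ ^ α j) * ‖c α‖ ≤
      supNormOn (lqBall n q) (fun z => ∑' β : Fin n → ℕ,
        if (∑ i, β i) = m then (∏ i, z i ^ β i) • c β else 0) := by
  set F : (Fin n → ℂ) → E := fun z => ∑' β : Fin n → ℕ,
        if (∑ i, β i) = m then (∏ i, z i ^ β i) • c β else 0 with hF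
  have hFeq : ∀ z, F z = ∑ β ∈ auxCB_T n m, (∏ i, z i ^ β i) • c β :=
    fun z => auxCB_tsum_eq c z
  have hbdd : BddAbove ((fun z => ‖F z‖) '' lqBall n q) := by
    refine ⟨∑ β ∈ auxCB_T n m, ‖c β‖, ?_⟩
    rintro x ⟨z, hz, rfl⟩
    simp only [hFeq]
    refine (norm_sum_le _ _).trans (Finset.sum_le_sum fun β _ => ?_)
    rw [norm_smul]
    have h1 : ‖∏ i, z i ^ β i‖ ≤ 1 := by
      rw [norm_prod]
      refine Finset.prod_le_one (fun i _ => norm_nonneg _) fun i _ => ?_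
      rw [norm_pow]
      exact pow_le_one₀ (norm_nonneg _) (auxCB_norm_le hq hz i)
    calc ‖∏ i, z i ^ β i‖ * ‖c β‖ ≤ 1 * ‖c β‖ :=
          mul_le_mul_of_nonneg_right h1 (norm_nonneg _)
      _ = ‖c β‖ := one_mul _
  have hle : ∀ z ∈ lqBall n q, ‖F z‖ ≤ supNormOn (lqBall n q) F :=
    fun z hz => le_csSup hbdd ⟨z, hz, rfl⟩
  set N := m + 1 with hNdef
  have hN0 : N ≠ 0 := Nat.succ_ne_zero m
  set ω : ℂ := Complex.exp (2 * Real.pi * Complex.I / N) with hωdef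
  have hprim : IsPrimitiveRoot ω N := Complex.isPrimitiveRoot_exp N hN0
  have hωN : ω ^ N = 1 := hprim.pow_eq_one
  have hnormω : ‖ω‖ = 1 := Complex.norm_eq_one_of_pow_eq_one hωN hN0
  have hdvd : ∀ d : ℤ, ω ^ d = 1 ↔ (N : ℤ) ∣ d := fun d => hprim.zpow_eq_one_iff_dvd d
  have hT : ∀ β ∈ auxCB_T n m, ∀ j, β j < N := fun β hβ j =>
    Finset.mem_range.mp (Fintype.mem_piFinset.mp (Finset.mem_filter.mp hβ).1 j)
  have hαT : α ∈ auxCB_T n m := auxCB_mem_T hα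
  have hid := auxCB_avg (Nat.pos_of_ne_zero hN0) hωN hdvd hT c w hαT
  have hrhs : ‖((N : ℂ) ^ n) • ((∏ j, w j ^ α j) • c α)‖
      = (N : ℝ) ^ n * ((∏ j, ‖w j‖ ^ α j) * ‖c α‖) := by
    rw [norm_smul, norm_smul, norm_prod]
    simp only [norm_pow, Complex.norm_natCast]
  have hmain : (N : ℝ) ^ n * ((∏ j, ‖w j‖ ^ α j) * ‖c α‖)
      ≤ (N : ℝ) ^ n * supNormOn (lqBall n q) F := by
    rw [← hrhs, ← hid]
    refine le_trans (norm_sum_le _ _) ?_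
    have hterm : ∀ k ∈ Fintype.piFinset (fun _ : Fin n => (Finset.univ : Finset (Fin N))),
        ‖(∏ j, ω ^ (-((k j : ℤ) * (α j : ℤ)))) •
          (∑ β ∈ auxCB_T n m, (∏ j, (ω ^ (k j : ℕ) * w j) ^ β j) • c β)‖
          ≤ supNormOn (lqBall n q) F := by
      intro k _
      rw [norm_smul]
      have hsc : ‖∏ j, ω ^ (-((k j : ℤ) * (α j : ℤ)))‖ = 1 := by
        rw [norm_prod]
        refine Finset.prod_eq_one fun j _ => ?_
        rw [norm_zpow, hnormω, one_zpow]
      rw [hsc, one_mul]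
      have hzmem : (fun j => ω ^ (k j : ℕ) * w j) ∈ lqBall n q := by
        have hcg : lqNorm n q (fun j => ω ^ (k j : ℕ) * w j) = lqNorm n q w := by
          refine auxCB_lqNorm_congr q fun i => ?_
          rw [norm_mul, norm_pow, hnormω, one_pow, one_mul]
        show lqNorm n q (fun j => ω ^ (k j : ℕ) * w j) < 1
        rw [hcg]
        exact hw
      have hle2 := hle _ hzmem
      rw [hFeq] at hle2
      exact hle2
    calc (∑ k ∈ Fintype.piFinset (fun _ : Fin n => (Finset.univ : Finset (Fin N))),
          ‖(∏ j, ω ^ (-((k j : ℤ) * (α j : ℤ)))) •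
            (∑ β ∈ auxCB_T n m, (∏ j, (ω ^ (k j : ℕ) * w j) ^ β j) • c β)‖)
        ≤ ∑ _k ∈ Fintype.piFinset (fun _ : Fin n => (Finset.univ : Finset (Fin N))),
            supNormOn (lqBall n q) F := Finset.sum_le_sum hterm
      _ = (N : ℝ) ^ n * supNormOn (lqBall n q) F := by
          rw [Finset.sum_const, Fintype.card_piFinset, nsmul_eq_mul]
          simp [Finset.card_univ]
  have hNpos : (0:ℝ) < (N : ℝ) ^ n := by positivity
  exact le_of_mul_le_mul_left hmain hNpos

private lemma auxCB_coef_le {E : Type*} [NormedAddCommGroup E] [NormedSpace ℂ E]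
    (n : ℕ) (q : ℝ≥0∞) (hq : 1 ≤ q) (c : (Fin n → ℕ) → E)
    (α : Fin n → ℕ) (m : ℕ) (hm : 1 ≤ m) (hα : (∑ i, α i) = m) :
    ‖c α‖ ≤ 4 / Real.pi *
        (((m : ℝ) ^ m / ∏ i, (α i : ℝ) ^ (α i)) ^ (1 / q.toReal)) *
        supNormOn (lqBall n q) (fun z => ∑' β : Fin n → ℕ,
          if (∑ i, β i) = m then (∏ i, z i ^ β i) • c β else 0) := by
  rcases Nat.eq_zero_or_pos n with hn | hn
  · exfalso; subst hn; simp at hα; omega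
  haveI : Nonempty (Fin n) := ⟨⟨0, hn⟩⟩
  set S := supNormOn (lqBall n q) (fun z => ∑' β : Fin n → ℕ,
          if (∑ i, β i) = m then (∏ i, z i ^ β i) • c β else 0) with hS
  set ρ : ℝ := ((m : ℝ) ^ m / ∏ i, (α i : ℝ) ^ (α i)) ^ (1 / q.toReal) with hρ
  have hA : (0:ℝ) < ∏ i, (α i : ℝ) ^ (α i) := by
    refine Finset.prod_pos fun i _ => ?_
    rcases Nat.eq_zero_or_pos (α i) with h | h
    · rw [h]; norm_num
    · exact pow_pos (by exact_mod_cast h) _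
  have hm0 : (0:ℝ) < (m:ℝ) := by exact_mod_cast (by omega : 0 < m)
  have hmpos : (0:ℝ) < (m:ℝ) ^ m := pow_pos hm0 _
  have hρpos : 0 < ρ := Real.rpow_pos_of_pos (div_pos hmpos hA) _
  have hkey : ∀ r : ℝ, 0 < r → r < 1 → r ^ m * ‖c α‖ ≤ ρ * S := by
    intro r hr0 hr1
    by_cases hqi : q = ∞
    · have hw : (fun _ : Fin n => (r : ℂ)) ∈ lqBall n q := by
        show lqNorm n q (fun _ : Fin n => (r : ℂ)) < 1
        unfold lqNorm
        rw [if_pos hqi, ciSup_const, Complex.norm_real, Real.norm_eq_abs, abs_of_pos hr0]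
        exact hr1
      have h1 := auxCB_coef_mul_le hq c hα hw
      have h2 : (∏ j, ‖(r:ℂ)‖ ^ α j) = r ^ m := by
        simp only [Complex.norm_real, Real.norm_eq_abs, abs_of_pos hr0]
        rw [Finset.prod_pow_eq_pow_sum, hα]
      have hρ1 : ρ = 1 := by
        rw [hρ, hqi]
        simp
      rw [h2] at h1
      rw [hρ1, one_mul]
      exact h1
    · have hqt : 1 ≤ q.toReal := by
        have := ENNReal.toReal_mono hqi hq
        simpa using this
      have hqt0 : q.toReal ≠ 0 := by linarith
      set x : Fin n → ℝ := fun j => ((α j : ℝ) / m) ^ (1 / q.toReal) with hx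
      have hx0 : ∀ j, 0 ≤ x j := fun j => Real.rpow_nonneg (by positivity) _
      set w : Fin n → ℂ := fun j => ((r * x j : ℝ) : ℂ) with hwdef
      have hnw : ∀ j, ‖w j‖ = r * x j := by
        intro j
        simp only [hwdef, Complex.norm_real, Real.norm_eq_abs]
        exact abs_of_nonneg (mul_nonneg hr0.le (hx0 j))
      have hwmem : w ∈ lqBall n q := by
        show lqNorm n q w < 1
        unfold lqNorm
        rw [if_neg hqi]
        have hterm : ∀ i : Fin n, ‖w i‖ ^ q.toReal = r ^ q.toReal * ((α i : ℝ) / m) := by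
          intro i
          rw [hnw i, Real.mul_rpow hr0.le (hx0 i)]
          congr 1
          simp only [hx]
          rw [← Real.rpow_mul (by positivity), one_div, inv_mul_cancel₀ hqt0, Real.rpow_one]
        have hsum : (∑ i, ‖w i‖ ^ q.toReal) = r ^ q.toReal := by
          rw [Finset.sum_congr rfl fun i _ => hterm i, ← Finset.mul_sum, ← Finset.sum_div]
          have hcast : (∑ i, (α i : ℝ)) = (m : ℝ) := by exact_mod_cast hα
          rw [hcast, div_self hm0.ne', mul_one]
        rw [hsum, ← Real.rpow_mul hr0.le, mul_one_div, div_self hqt0, Real.rpow_one]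
        exact hr1
      have h1 := auxCB_coef_mul_le hq c hα hwmem
      have h2 : ∀ j, ‖w j‖ ^ α j = r ^ α j * (((α j : ℝ) / m) ^ (α j : ℕ)) ^ (1 / q.toReal) := by
        intro j
        rw [hnw j, mul_pow]
        congr 1
        simp only [hx]
        rw [← Real.rpow_natCast (((α j : ℝ) / m) ^ (1 / q.toReal)) (α j),
          ← Real.rpow_mul (by positivity), mul_comm (1 / q.toReal) ((α j : ℕ) : ℝ),
          Real.rpow_mul (by positivity), Real.rpow_natCast]
      have h3 : (∏ i, ((α i : ℝ) / (m:ℝ)) ^ α i)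
          = (∏ i, (α i : ℝ) ^ α i) / (m:ℝ) ^ m := by
        rw [show (∏ i, ((α i : ℝ) / (m:ℝ)) ^ α i)
            = ∏ i, ((α i : ℝ) ^ α i / (m:ℝ) ^ α i) from
          Finset.prod_congr rfl fun i _ => div_pow _ _ _,
          Finset.prod_div_distrib, Finset.prod_pow_eq_pow_sum, hα]
      have hprod : (∏ j, ‖w j‖ ^ α j)
          = r ^ m * (((∏ i, (α i : ℝ) ^ α i) / (m:ℝ) ^ m) ^ (1 / q.toReal)) := by
        rw [Finset.prod_congr rfl fun j _ => h2 j, Finset.prod_mul_distrib,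
          Finset.prod_pow_eq_pow_sum, hα,
          Real.finset_prod_rpow _ _ (fun i _ => by positivity) _, h3]
      have hρprod : ρ * (((∏ i, (α i : ℝ) ^ α i) / (m:ℝ) ^ m) ^ (1 / q.toReal)) = 1 := by
        rw [hρ, ← Real.mul_rpow (by positivity) (by positivity)]
        rw [show ((m:ℝ) ^ m / ∏ i, (α i : ℝ) ^ α i)
            * ((∏ i, (α i : ℝ) ^ α i) / (m:ℝ) ^ m) = 1 from by
          field_simp]
        exact Real.one_rpow _
      have h4 : (r ^ m * (((∏ i, (α i : ℝ) ^ α i) / (m:ℝ) ^ m) ^ (1 / q.toReal))) * ‖c α‖ ≤ S := by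
        rw [← hprod]
        exact h1
      calc r ^ m * ‖c α‖
          = (ρ * (((∏ i, (α i : ℝ) ^ α i) / (m:ℝ) ^ m) ^ (1 / q.toReal))) * (r ^ m * ‖c α‖) := by
            rw [hρprod, one_mul]
        _ = ρ * ((r ^ m * (((∏ i, (α i : ℝ) ^ α i) / (m:ℝ) ^ m) ^ (1 / q.toReal))) * ‖c α‖) := by
            ring
        _ ≤ ρ * S := mul_le_mul_of_nonneg_left h4 hρpos.le
  have hlim : Filter.Tendsto (fun r : ℝ => r ^ m * ‖c α‖)
      (nhdsWithin 1 (Set.Iio 1)) (nhds (‖c α‖)) := by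
    have h0 : Filter.Tendsto (fun r : ℝ => r ^ m * ‖c α‖) (nhds 1)
        (nhds (1 ^ m * ‖c α‖)) := ((continuous_pow m).mul continuous_const).tendsto 1
    simpa using h0.mono_left nhdsWithin_le_nhds
  have hev : ∀ᶠ r in nhdsWithin (1:ℝ) (Set.Iio 1), r ^ m * ‖c α‖ ≤ ρ * S := by
    filter_upwards [Ioo_mem_nhdsLT (by norm_num : (0:ℝ) < 1)] with r hr
    exact hkey r hr.1 hr.2
  have hfin : ‖c α‖ ≤ ρ * S := le_of_tendsto hlim hev
  have hρS : 0 ≤ ρ * S := le_trans (norm_nonneg _) hfin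
  have hπ : 1 ≤ 4 / Real.pi := by
    rw [le_div_iff₀ Real.pi_pos]
    linarith [Real.pi_le_four]
  calc ‖c α‖ ≤ ρ * S := hfin
    _ = 1 * (ρ * S) := (one_mul _).symm
    _ ≤ (4 / Real.pi) * (ρ * S) := mul_le_mul_of_nonneg_right hπ hρS
    _ = 4 / Real.pi * ρ * S := by ring

end AuxCB

/-- Lemma 3.1, second part: coefficient estimates on `B_{ℓ^n_q}` for
the sums and differences of the coefficients of a bounded pluriharmonic function. -/
theorem coefficient_bound_lq
    {H : Type*} [NormedAddCommGroup H] [InnerProductSpace ℂ H] [CompleteSpace H]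
    (n : ℕ) (q : ℝ≥0∞) (hq : 1 ≤ q)
    (f : (Fin n → ℂ) → H →L[ℂ] H) (a b : (Fin n → ℕ) → H →L[ℂ] H)
    (hf : IsPHRep (lqBall n q) f a b)
    (hbd : BddAbove ((fun z => ‖f z‖) '' lqBall n q))
    (α : Fin n → ℕ) (m : ℕ) (hm : 1 ≤ m) (hα : (∑ i, α i) = m) :
    ‖a α + b α‖ ≤ 4 / Real.pi *
        (((m : ℝ) ^ m / ∏ i, (α i : ℝ) ^ (α i)) ^ (1 / q.toReal)) *
        supNormOn (lqBall n q) (fun z => ∑' β : Fin n → ℕ,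
          if (∑ i, β i) = m then (∏ i, z i ^ β i) • (a β + b β) else 0) ∧
    ‖a α - b α‖ ≤ 4 / Real.pi *
        (((m : ℝ) ^ m / ∏ i, (α i : ℝ) ^ (α i)) ^ (1 / q.toReal)) *
        supNormOn (lqBall n q) (fun z => ∑' β : Fin n → ℕ,
          if (∑ i, β i) = m then (∏ i, z i ^ β i) • (a β - b β) else 0) := by
  exact ⟨auxCB_coef_le n q hq (fun β => a β + b β) α m hm hα,
    auxCB_coef_le n q hq (fun β => a β - b β) α m hm hα⟩
end

section
/- Let ℋ be a complex Hilbert space, X = 𝓑(ℋ), Y a complex Banach space, U : X → Y a bounded linear operator with ‖U‖ ≤ λ, and 1 ≤ p < ∞. Let Ω₁ and Ω₂ be two bounded simply connected complete Reinhardt domains in ℂⁿ. Then R_λ(Ω₂, p, U)/(S(Ω₁,Ω₂) · S(Ω₂,Ω₁)) ≤ R_λ(Ω₁, p, U) ≤ S(Ω₁,Ω₂) · S(Ω₂,Ω₁) · R_λ(Ω₂, p, U). -/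
open scoped BigOperators ENNReal ComplexConjugate Pointwise

section AuxProof

variable {H : Type*} [NormedAddCommGroup H] [InnerProductSpace ℂ H] [CompleteSpace H]
variable {Y : Type*} [NormedAddCommGroup Y] [NormedSpace ℂ Y]

/-- The set whose supremum defines `bohrR`. -/
def BSet {n : ℕ} (Ω : Set (Fin n → ℂ)) (p lam : ℝ) (U : (H →L[ℂ] H) →L[ℂ] Y) : Set ℝ :=
  {r : ℝ | 0 ≤ r ∧
    ∀ (f : (Fin n → ℂ) → H →L[ℂ] H) (a b : (Fin n → ℕ) → H →L[ℂ] H),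
      IsPHRep Ω f a b → BddAbove ((fun z => ‖f z‖) '' Ω) →
      ∀ z ∈ Ω, ∀ F : Finset (Fin n → ℕ),
        ∑ α ∈ F, (‖U (a α)‖ ^ p + ‖U (b α)‖ ^ p) * ‖∏ i, (r • z) i ^ α i‖ ^ p
          ≤ lam ^ p * supNormOn Ω f ^ p}

lemma bohrR_eq_sSup_BSet {n : ℕ} (Ω : Set (Fin n → ℂ)) (p lam : ℝ)
    (U : (H →L[ℂ] H) →L[ℂ] Y) : bohrR Ω p lam U = sSup (BSet Ω p lam U) := rfl

lemma bohrR_nonneg {n : ℕ} (Ω : Set (Fin n → ℂ)) (p lam : ℝ)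
    (U : (H →L[ℂ] H) →L[ℂ] Y) : 0 ≤ bohrR Ω p lam U :=
  Real.sSup_nonneg (fun _ hr => hr.1)

lemma transfer_BSet {n : ℕ} {Ω₁ Ω₂ : Set (Fin n → ℂ)} {p lam : ℝ}
    (U : (H →L[ℂ] H) →L[ℂ] Y) (hp : 1 ≤ p) (hlam : 0 ≤ lam)
    {s t : ℝ} (hs : 0 < s) (ht : 0 < t)
    (h12 : Ω₁ ⊆ s • Ω₂) (h21 : Ω₂ ⊆ t • Ω₁) (h02 : (0 : Fin n → ℂ) ∈ Ω₂)
    {r : ℝ} (hr : r ∈ BSet Ω₂ p lam U) : r / (s * t) ∈ BSet Ω₁ p lam U := by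
  obtain ⟨hr0, hr⟩ := hr
  refine ⟨by positivity, ?_⟩
  intro f a b hrep hbdd z hz F
  set c : ℂ := ((t : ℂ))⁻¹ with hc
  have hconjc : (starRingEnd ℂ) c = c := by
    rw [hc, map_inv₀, Complex.conj_ofReal]
  have hmem : ∀ v ∈ Ω₂, t⁻¹ • v ∈ Ω₁ := by
    intro v hv
    obtain ⟨x, hx, hxv⟩ := h21 hv
    rw [← hxv, inv_smul_smul₀ ht.ne']
    exact hx
  set g : (Fin n → ℂ) → H →L[ℂ] H := fun v => f (t⁻¹ • v) with hg
  set a' : (Fin n → ℕ) → H →L[ℂ] H := fun α => c ^ (∑ i, α i) • a α with ha'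
  set b' : (Fin n → ℕ) → H →L[ℂ] H := fun α => c ^ (∑ i, α i) • b α with hb'
  have hcomp : ∀ (v : Fin n → ℂ) (i : Fin n), (t⁻¹ • v) i = c * v i := by
    intro v i
    simp [Pi.smul_apply, Complex.real_smul, Complex.ofReal_inv, hc]
  have hrepg : IsPHRep Ω₂ g a' b' := by
    refine ⟨?_, ?_, ?_⟩
    · exact hrep.1.comp (continuous_const_smul _).continuousOn hmem
    · simp [hb', hrep.2.1]
    · intro v hv
      have h0 := hrep.2.2 _ (hmem v hv)
      have hfe : (fun α : Fin n → ℕ =>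
          (∏ i, (t⁻¹ • v) i ^ α i) • a α
            + (∏ i, (starRingEnd ℂ) ((t⁻¹ • v) i) ^ α i) • star (b α))
          = fun α : Fin n → ℕ =>
          (∏ i, v i ^ α i) • a' α + (∏ i, (starRingEnd ℂ) (v i) ^ α i) • star (b' α) := by
        funext α
        have e1 : ∏ i, (t⁻¹ • v) i ^ α i = c ^ (∑ i, α i) * ∏ i, v i ^ α i := by
          simp only [hcomp]
          simp [mul_pow, Finset.prod_mul_distrib, Finset.prod_pow_eq_pow_sum]
        have e2 : ∏ i, (starRingEnd ℂ) ((t⁻¹ • v) i) ^ α i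
            = c ^ (∑ i, α i) * ∏ i, (starRingEnd ℂ) (v i) ^ α i := by
          simp only [hcomp, map_mul, hconjc]
          simp [mul_pow, Finset.prod_mul_distrib, Finset.prod_pow_eq_pow_sum]
        have hstar : star (c ^ (∑ i, α i) • b α)
            = c ^ (∑ i, α i) • star (b α) := by
          simp [star_smul, star_pow, Complex.star_def, hconjc]
        rw [e1, e2, ha', hb']
        simp only [hstar, smul_smul]
        rw [mul_comm (∏ i, v i ^ α i), mul_comm (∏ i, (starRingEnd ℂ) (v i) ^ α i)]
      exact hfe ▸ h0
  have himg : (fun v => ‖g v‖) '' Ω₂ ⊆ (fun z => ‖f z‖) '' Ω₁ := by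
    rintro y ⟨v, hv, rfl⟩
    exact ⟨t⁻¹ • v, hmem v hv, rfl⟩
  have hbddg : BddAbove ((fun v => ‖g v‖) '' Ω₂) := hbdd.mono himg
  have hsup : supNormOn Ω₂ g ≤ supNormOn Ω₁ f :=
    csSup_le_csSup hbdd ⟨‖g 0‖, ⟨0, h02, rfl⟩⟩ himg
  have hsup0 : 0 ≤ supNormOn Ω₂ g :=
    le_trans (norm_nonneg (g 0)) (le_csSup hbddg ⟨0, h02, rfl⟩)
  obtain ⟨w, hw, hwz⟩ := h12 hz
  have key := hr g a' b' hrepg hbddg w hw F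
  have hzi : ∀ i, z i = (s : ℂ) * w i := by
    intro i
    rw [← hwz]
    simp [Pi.smul_apply, Complex.real_smul]
  have hnc : ‖c‖ = t⁻¹ := by
    rw [hc, norm_inv, Complex.norm_real, Real.norm_eq_abs, abs_of_pos ht]
  have hterm : ∀ α : Fin n → ℕ,
      (‖U (a α)‖ ^ p + ‖U (b α)‖ ^ p) * ‖∏ i, ((r / (s * t)) • z) i ^ α i‖ ^ p
      = (‖U (a' α)‖ ^ p + ‖U (b' α)‖ ^ p) * ‖∏ i, (r • w) i ^ α i‖ ^ p := by
    intro α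
    have hτ : (0:ℝ) ≤ t⁻¹ ^ (∑ i, α i) := by positivity
    have hna : ‖U (a' α)‖ = t⁻¹ ^ (∑ i, α i) * ‖U (a α)‖ := by
      rw [ha']
      simp only [map_smul, norm_smul, norm_pow, hnc]
    have hnb : ‖U (b' α)‖ = t⁻¹ ^ (∑ i, α i) * ‖U (b α)‖ := by
      rw [hb']
      simp only [map_smul, norm_smul, norm_pow, hnc]
    have hP : ‖∏ i, ((r / (s * t)) • z) i ^ α i‖
        = t⁻¹ ^ (∑ i, α i) * ‖∏ i, (r • w) i ^ α i‖ := by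
      rw [norm_prod, norm_prod]
      have hper : ∀ i, ‖((r / (s * t)) • z) i‖ = t⁻¹ * ‖(r • w) i‖ := by
        intro i
        simp only [Pi.smul_apply, norm_smul, Real.norm_eq_abs, hzi i, norm_mul,
          Complex.norm_real]
        rw [abs_of_nonneg hr0, abs_of_pos hs,
          abs_of_nonneg (by positivity : (0:ℝ) ≤ r / (s * t))]
        field_simp
      simp only [norm_pow, hper, mul_pow]
      rw [Finset.prod_mul_distrib, Finset.prod_pow_eq_pow_sum]
    rw [hna, hnb, hP, Real.mul_rpow hτ (norm_nonneg _), Real.mul_rpow hτ (norm_nonneg _),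
      Real.mul_rpow hτ (norm_nonneg _)]
    ring
  calc ∑ α ∈ F, (‖U (a α)‖ ^ p + ‖U (b α)‖ ^ p) * ‖∏ i, ((r / (s * t)) • z) i ^ α i‖ ^ p
      = ∑ α ∈ F, (‖U (a' α)‖ ^ p + ‖U (b' α)‖ ^ p) * ‖∏ i, (r • w) i ^ α i‖ ^ p :=
        Finset.sum_congr rfl (fun α _ => hterm α)
    _ ≤ lam ^ p * supNormOn Ω₂ g ^ p := key
    _ ≤ lam ^ p * supNormOn Ω₁ f ^ p := by
        apply mul_le_mul_of_nonneg_left _ (Real.rpow_nonneg hlam p)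
        exact Real.rpow_le_rpow hsup0 hsup (le_trans zero_le_one hp)

lemma bohrR_le_smul {n : ℕ} {Ω₁ Ω₂ : Set (Fin n → ℂ)} {p lam : ℝ}
    (U : (H →L[ℂ] H) →L[ℂ] Y) (hp : 1 ≤ p) (hlam : 0 ≤ lam)
    {s t : ℝ} (hs : 0 < s) (ht : 0 < t)
    (h12 : Ω₁ ⊆ s • Ω₂) (h21 : Ω₂ ⊆ t • Ω₁)
    (h01 : (0 : Fin n → ℂ) ∈ Ω₁) (h02 : (0 : Fin n → ℂ) ∈ Ω₂) :
    bohrR Ω₂ p lam U ≤ s * t * bohrR Ω₁ p lam U := by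
  have hK1 : 0 ≤ bohrR Ω₁ p lam U := bohrR_nonneg _ _ _ _
  by_cases hB : BddAbove (BSet (H := H) (Y := Y) Ω₁ p lam U)
  · rw [bohrR_eq_sSup_BSet]
    refine Real.sSup_le ?_ (by positivity)
    intro r hrm
    have h := transfer_BSet U hp hlam hs ht h12 h21 h02 hrm
    have h2 := le_csSup hB h
    rw [← bohrR_eq_sSup_BSet, div_le_iff₀ (by positivity)] at h2
    calc r ≤ bohrR Ω₁ p lam U * (s * t) := h2
      _ = s * t * bohrR Ω₁ p lam U := by ring
  · have hB2 : ¬ BddAbove (BSet (H := H) (Y := Y) Ω₂ p lam U) := by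
      rintro ⟨M, hM⟩
      apply hB
      refine ⟨t * s * M, ?_⟩
      intro r hrm
      have h := transfer_BSet U hp hlam ht hs h21 h12 h01 hrm
      have h2 := hM h
      rw [div_le_iff₀ (by positivity)] at h2
      calc r ≤ M * (t * s) := h2
        _ ≤ t * s * M := by ring_nf; exact le_refl _
    rw [bohrR_eq_sSup_BSet, bohrR_eq_sSup_BSet, Real.sSup_of_not_bddAbove hB,
      Real.sSup_of_not_bddAbove hB2]
    simp

lemma le_of_forall_gt_mul {A c X : ℝ} (hc : 0 ≤ c) (h : ∀ s, A < s → X ≤ s * c) :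
    X ≤ A * c := by
  rcases eq_or_lt_of_le hc with hc0 | hc0
  · have h1 := h (A + 1) (by linarith)
    rw [← hc0] at h1 ⊢
    simpa using h1
  · by_contra hcon
    push_neg at hcon
    have hA : A < X / c := (lt_div_iff₀ hc0).mpr (by linarith)
    have h1 := h ((A + X / c) / 2) (by linarith)
    have hlt : (A + X / c) / 2 < X / c := by linarith
    have h3 := mul_lt_mul_of_pos_right hlt hc0
    rw [div_mul_cancel₀ _ hc0.ne'] at h3
    linarith

lemma domRatio_set_nonempty {n : ℕ} {Ω₁ Ω₂ : Set (Fin n → ℂ)}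
    (hb : Bornology.IsBounded Ω₁) (ho : IsOpen Ω₂)
    (h02 : (0 : Fin n → ℂ) ∈ Ω₂) (h01 : (0 : Fin n → ℂ) ∈ Ω₁) :
    {s : ℝ | 0 < s ∧ Ω₁ ⊆ s • Ω₂}.Nonempty := by
  obtain ⟨R, hR⟩ := hb.subset_closedBall 0
  obtain ⟨ε, hε, hball⟩ := Metric.isOpen_iff.mp ho 0 h02
  have hR0 : 0 ≤ R := by
    have := hR h01
    simpa using this
  refine ⟨(R + 1) / ε, by positivity, ?_⟩
  intro z hz
  refine ⟨((R + 1) / ε)⁻¹ • z, ?_, smul_inv_smul₀ (by positivity) z⟩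
  apply hball
  rw [Metric.mem_ball, dist_zero_right, norm_smul, Real.norm_eq_abs,
    abs_of_pos (by positivity)]
  have hz' : ‖z‖ ≤ R := by
    have := hR hz
    rwa [Metric.mem_closedBall, dist_zero_right] at this
  calc ((R + 1) / ε)⁻¹ * ‖z‖ ≤ ((R + 1) / ε)⁻¹ * R :=
        mul_le_mul_of_nonneg_left hz' (by positivity)
    _ < ε := by
        rw [inv_div, div_mul_eq_mul_div, div_lt_iff₀ (by positivity)]
        nlinarith

lemma bohrR_comp_half {n : ℕ} {Ω₁ Ω₂ : Set (Fin n → ℂ)} {p lam : ℝ}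
    (U : (H →L[ℂ] H) →L[ℂ] Y) (hp : 1 ≤ p) (hlam : 0 ≤ lam)
    (ho₁ : IsOpen Ω₁) (ho₂ : IsOpen Ω₂)
    (h01 : (0 : Fin n → ℂ) ∈ Ω₁) (h02 : (0 : Fin n → ℂ) ∈ Ω₂)
    (hb₁ : Bornology.IsBounded Ω₁) (hb₂ : Bornology.IsBounded Ω₂) :
    bohrR Ω₂ p lam U ≤ domRatio Ω₁ Ω₂ * domRatio Ω₂ Ω₁ * bohrR Ω₁ p lam U := by
  have hT1 : {s : ℝ | 0 < s ∧ Ω₁ ⊆ s • Ω₂}.Nonempty :=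
    domRatio_set_nonempty hb₁ ho₂ h02 h01
  have hT2 : {s : ℝ | 0 < s ∧ Ω₂ ⊆ s • Ω₁}.Nonempty :=
    domRatio_set_nonempty hb₂ ho₁ h01 h02
  have hbd1 : BddBelow {s : ℝ | 0 < s ∧ Ω₁ ⊆ s • Ω₂} := ⟨0, fun x hx => hx.1.le⟩
  have hbd2 : BddBelow {s : ℝ | 0 < s ∧ Ω₂ ⊆ s • Ω₁} := ⟨0, fun x hx => hx.1.le⟩
  have hK : 0 ≤ bohrR Ω₁ p lam U := bohrR_nonneg _ _ _ _
  have hA : 0 ≤ domRatio Ω₁ Ω₂ := Real.sInf_nonneg (fun x hx => hx.1.le)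
  have hB : 0 ≤ domRatio Ω₂ Ω₁ := Real.sInf_nonneg (fun x hx => hx.1.le)
  have step : ∀ s, domRatio Ω₁ Ω₂ < s → ∀ t, domRatio Ω₂ Ω₁ < t →
      bohrR Ω₂ p lam U ≤ s * t * bohrR Ω₁ p lam U := by
    intro s hsA t htB
    obtain ⟨s₀, hs₀T, hs₀⟩ := (csInf_lt_iff hbd1 hT1).mp hsA
    obtain ⟨t₀, ht₀T, ht₀⟩ := (csInf_lt_iff hbd2 hT2).mp htB
    have h := bohrR_le_smul U hp hlam hs₀T.1 ht₀T.1 hs₀T.2 ht₀T.2 h01 h02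
    refine h.trans ?_
    apply mul_le_mul_of_nonneg_right _ hK
    have h1 : 0 < s₀ := hs₀T.1
    have h2 : 0 < t₀ := ht₀T.1
    nlinarith
  have step2 : ∀ t, domRatio Ω₂ Ω₁ < t →
      bohrR Ω₂ p lam U ≤ t * (domRatio Ω₁ Ω₂ * bohrR Ω₁ p lam U) := by
    intro t htB
    have ht0 : 0 ≤ t := le_trans hB htB.le
    have h' : ∀ s, domRatio Ω₁ Ω₂ < s →
        bohrR Ω₂ p lam U ≤ s * (t * bohrR Ω₁ p lam U) := by
      intro s hsA
      exact (step s hsA t htB).trans_eq (by ring)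
    have h2 := le_of_forall_gt_mul (by positivity) h'
    exact h2.trans_eq (by ring)
  have hfin := le_of_forall_gt_mul (by positivity) step2
  exact hfin.trans_eq (by ring)

end AuxProof

/-- Lemma 3.5: comparison of the Bohr radii of two bounded simply
connected complete Reinhardt domains. -/
theorem bohrR_domain_comparison
    {H : Type*} [NormedAddCommGroup H] [InnerProductSpace ℂ H] [CompleteSpace H]
    {Y : Type*} [NormedAddCommGroup Y] [NormedSpace ℂ Y]
    (U : (H →L[ℂ] H) →L[ℂ] Y) (p lam : ℝ) (hp : 1 ≤ p) (hU : ‖U‖ ≤ lam)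
    (n : ℕ) (Ω₁ Ω₂ : Set (Fin n → ℂ))
    (h₁ : IsCompleteReinhardt Ω₁) (h₂ : IsCompleteReinhardt Ω₂)
    (hb₁ : Bornology.IsBounded Ω₁) (hb₂ : Bornology.IsBounded Ω₂)
    (hs₁ : SimplyConnectedSpace ↥Ω₁) (hs₂ : SimplyConnectedSpace ↥Ω₂) :
    bohrR Ω₂ p lam U / (domRatio Ω₁ Ω₂ * domRatio Ω₂ Ω₁) ≤ bohrR Ω₁ p lam U ∧
    bohrR Ω₁ p lam U ≤ domRatio Ω₁ Ω₂ * domRatio Ω₂ Ω₁ * bohrR Ω₂ p lam U := by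
  have hlam : 0 ≤ lam := le_trans (norm_nonneg U) hU
  have half1 : bohrR Ω₂ p lam U ≤ domRatio Ω₁ Ω₂ * domRatio Ω₂ Ω₁ * bohrR Ω₁ p lam U :=
    bohrR_comp_half U hp hlam h₁.1 h₂.1 h₁.2.2.1 h₂.2.2.1 hb₁ hb₂
  have half2 : bohrR Ω₁ p lam U ≤ domRatio Ω₂ Ω₁ * domRatio Ω₁ Ω₂ * bohrR Ω₂ p lam U :=
    bohrR_comp_half U hp hlam h₂.1 h₁.1 h₂.2.2.1 h₁.2.2.1 hb₂ hb₁
  have hA : 0 ≤ domRatio Ω₁ Ω₂ := Real.sInf_nonneg (fun x hx => hx.1.le)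
  have hB : 0 ≤ domRatio Ω₂ Ω₁ := Real.sInf_nonneg (fun x hx => hx.1.le)
  constructor
  · rcases eq_or_lt_of_le (mul_nonneg hA hB) with h0 | h0
    · rw [← h0, div_zero]
      exact bohrR_nonneg _ _ _ _
    · rw [div_le_iff₀ h0]
      exact half1.trans_eq (by ring)
  · exact half2.trans_eq (by ring)
end

section
/- Let ℋ be a complex Hilbert space, X = 𝓑(ℋ), Y a complex Banach space, U : X → Y a bounded linear operator with ‖U‖ ≤ λ, and 1 ≤ p < ∞. Then for every bounded simply connected complete Reinhardt domain Ω ⊆ ℂⁿ one has R_λ(Ω, p, U) ≥ R_λ(𝔻ⁿ, p, U), where 𝔻ⁿ is the open unit polydisc in ℂⁿ. -/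
open scoped BigOperators ENNReal ComplexConjugate Pointwise

/-! Pulling a bounded pluriharmonic `f` on `Ω₁` back along a diagonal map `w ↦ c * w` that
sends `Ω₂` into `Ω₁` multiplies its `α`-th coefficients by `c ^ α` and does not increase its
sup norm, so a point `ζ` where the Bohr inequality holds for `Ω₂` yields the point `c * ζ`
for `Ω₁`. For `z ∈ Ω` pick `t > 1` with `t • z ∈ Ω`; since `Ω` is complete Reinhardt,
`w ↦ (t • z) * w` maps the polydisc `𝔻ⁿ` into `Ω`, and `(t • z) * (r • t⁻¹ • 1) = r • z`.
Hence every radius admissible for `𝔻ⁿ` is admissible for `Ω`.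

Since `sSup` of an unbounded set of reals is `0`, one also needs that the radii admissible
for `Ω` are bounded when those for `𝔻ⁿ` are: with `ε • 𝔻ⁿ ⊆ Ω ⊆ s • 𝔻ⁿ`, a radius `r`
admissible for `Ω` makes `ε / s * r` admissible for `𝔻ⁿ`. -/

open Set Metric Filter Topology

lemma lqNorm_top {n : ℕ} (z : Fin n → ℂ) : lqNorm n ∞ z = ‖z‖ := by
  rw [lqNorm, if_pos rfl]
  refine le_antisymm (Real.iSup_le (norm_le_pi_norm z) (norm_nonneg z)) ?_
  exact (pi_norm_le_iff_of_nonneg (Real.iSup_nonneg fun _ => norm_nonneg _)).2 fun i =>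
    le_ciSup (f := fun i => ‖z i‖) (finite_range _).bddAbove i

lemma lqBall_top (n : ℕ) : lqBall n ∞ = ball 0 1 := by
  ext z
  simp only [lqBall, mem_ofPred_eq, lqNorm_top, mem_ball_zero_iff]

lemma Real.sSup_le_sSup_of_subset {A B : Set ℝ} (hB : ∀ x ∈ B, 0 ≤ x) (hAB : A ⊆ B)
    (hbdd : BddAbove A → BddAbove B) : sSup A ≤ sSup B := by
  by_cases hB' : BddAbove B
  · rcases A.eq_empty_or_nonempty with rfl | hA
    · exact Real.sSup_empty.trans_le (Real.sSup_nonneg hB)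
    · exact csSup_le_csSup hB' hA hAB
  · rw [Real.sSup_of_not_bddAbove hB', Real.sSup_of_not_bddAbove (mt hbdd hB')]

lemma prod_mul_pow {n : ℕ} (c ζ : Fin n → ℂ) (α : Fin n → ℕ) :
    ∏ i, (c * ζ) i ^ α i = (∏ i, c i ^ α i) * ∏ i, ζ i ^ α i := by
  simp only [Pi.mul_apply, mul_pow, Finset.prod_mul_distrib]

lemma supNormOn_comp_le {m n : ℕ} {X : Type*} [NormedAddCommGroup X]
    {Ω₁ : Set (Fin n → ℂ)} {Ω₂ : Set (Fin m → ℂ)} {f : (Fin n → ℂ) → X}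
    {g : (Fin m → ℂ) → Fin n → ℂ} (hg : MapsTo g Ω₂ Ω₁)
    (hf : BddAbove ((fun z => ‖f z‖) '' Ω₁)) :
    BddAbove ((fun w => ‖f (g w)‖) '' Ω₂) ∧ supNormOn Ω₂ (f ∘ g) ≤ supNormOn Ω₁ f := by
  have hsub : (fun w => ‖f (g w)‖) '' Ω₂ ⊆ (fun z => ‖f z‖) '' Ω₁ := by
    rintro _ ⟨w, hw, rfl⟩
    exact ⟨g w, hg hw, rfl⟩
  refine ⟨hf.mono hsub, Real.sSup_le (fun x hx => le_csSup hf (hsub hx)) ?_⟩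
  exact Real.sSup_nonneg fun _ ⟨_, _, hx⟩ => hx ▸ norm_nonneg _

lemma IsOpen.exists_one_lt_smul_mem {E : Type*} [TopologicalSpace E] [MulAction ℝ E]
    [ContinuousSMul ℝ E] {Ω : Set E} (hΩ : IsOpen Ω) {z : E} (hz : z ∈ Ω) :
    ∃ t : ℝ, 1 < t ∧ t • z ∈ Ω := by
  have hlim : Tendsto (fun t : ℝ => t • z) (𝓝[>] 1) (𝓝 z) :=
    ((continuous_id.smul continuous_const : Continuous fun t : ℝ => t • z).tendsto' 1 z
      (one_smul ℝ z)).mono_left nhdsWithin_le_nhds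
  obtain ⟨t, ht, ht1⟩ := ((hlim.eventually (hΩ.mem_nhds hz)).and self_mem_nhdsWithin).exists
  exact ⟨t, ht1, ht⟩

lemma IsCompleteReinhardt.mapsTo_mul_ball {n : ℕ} {Ω : Set (Fin n → ℂ)}
    (hΩ : IsCompleteReinhardt Ω) {c : Fin n → ℂ} (hc : c ∈ Ω) :
    MapsTo (c * ·) (ball 0 1) Ω := fun w hw =>
  hΩ.2.2.2 c hc _ fun j => by
    change ‖c j * w j‖ ≤ _
    rw [norm_mul]
    exact mul_le_of_le_one_right (norm_nonneg _) ((norm_le_pi_norm w j).trans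
      (mem_ball_zero_iff.1 hw).le)

section BohrPoints

variable {H : Type*} [NormedAddCommGroup H] [InnerProductSpace ℂ H] [CompleteSpace H]
variable {Y : Type*} [NormedAddCommGroup Y] [NormedSpace ℂ Y]
variable {n : ℕ} {Ω Ω₁ Ω₂ : Set (Fin n → ℂ)} {p lam : ℝ} {U : (H →L[ℂ] H) →L[ℂ] Y}

def bohrPoints (Ω : Set (Fin n → ℂ)) (p lam : ℝ) (U : (H →L[ℂ] H) →L[ℂ] Y) :
    Set (Fin n → ℂ) :=
  {ζ | ∀ (f : (Fin n → ℂ) → H →L[ℂ] H) (a b : (Fin n → ℕ) → H →L[ℂ] H),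
    IsPHRep Ω f a b → BddAbove ((fun z => ‖f z‖) '' Ω) → ∀ F : Finset (Fin n → ℕ),
      ∑ α ∈ F, (‖U (a α)‖ ^ p + ‖U (b α)‖ ^ p) * ‖∏ i, ζ i ^ α i‖ ^ p
        ≤ lam ^ p * supNormOn Ω f ^ p}

lemma bohrR_eq_sSup :
    bohrR Ω p lam U = sSup {r : ℝ | 0 ≤ r ∧ r • Ω ⊆ bohrPoints Ω p lam U} := by
  refine congrArg sSup (ext fun r => and_congr_right fun _ => ?_)
  rw [smul_set_subset_iff]
  exact ⟨fun h z hz f a b hf hbdd F => h f a b hf hbdd z hz F,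
    fun h f a b hf hbdd z hz F => h hz f a b hf hbdd F⟩

lemma IsPHRep.comp_mul {f : (Fin n → ℂ) → H →L[ℂ] H} {a b : (Fin n → ℕ) → H →L[ℂ] H}
    (hf : IsPHRep Ω₁ f a b) {c : Fin n → ℂ} (hc : MapsTo (c * ·) Ω₂ Ω₁) :
    IsPHRep Ω₂ (fun w => f (c * w)) (fun α => (∏ i, c i ^ α i) • a α)
      (fun α => (∏ i, c i ^ α i) • b α) := by
  obtain ⟨hcont, hb0, hsum⟩ := hf
  refine ⟨hcont.comp (continuous_const.mul continuous_id).continuousOn hc, by simp [hb0],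
    fun w hw => ?_⟩
  convert hsum _ (hc hw) using 2 with α
  simp only [star_smul, smul_smul, Complex.star_def, map_prod, map_pow,
    Pi.mul_apply, map_mul, mul_pow, Finset.prod_mul_distrib]
  congr 2 <;> exact mul_comm _ _

lemma mul_mem_bohrPoints (hlam : 0 ≤ lam) (hp : 0 ≤ p) {c ζ : Fin n → ℂ}
    (hc : MapsTo (c * ·) Ω₂ Ω₁) (hζ : ζ ∈ bohrPoints Ω₂ p lam U) :
    c * ζ ∈ bohrPoints Ω₁ p lam U := by
  intro f a b hf hbdd F
  obtain ⟨hbdd', hsup⟩ := supNormOn_comp_le hc hbdd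
  calc ∑ α ∈ F, (‖U (a α)‖ ^ p + ‖U (b α)‖ ^ p) * ‖∏ i, (c * ζ) i ^ α i‖ ^ p
      = ∑ α ∈ F, (‖U ((∏ i, c i ^ α i) • a α)‖ ^ p + ‖U ((∏ i, c i ^ α i) • b α)‖ ^ p)
          * ‖∏ i, ζ i ^ α i‖ ^ p := by
        refine Finset.sum_congr rfl fun α _ => ?_
        simp only [prod_mul_pow, map_smul, norm_smul, norm_mul,
          Real.mul_rpow (norm_nonneg _) (norm_nonneg _)]
        ring
    _ ≤ lam ^ p * supNormOn Ω₂ (f ∘ (c * ·)) ^ p := hζ _ _ _ (hf.comp_mul hc) hbdd' F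
    _ ≤ lam ^ p * supNormOn Ω₁ f ^ p := by
        gcongr
        exact Real.sSup_nonneg fun _ ⟨_, _, hx⟩ => hx ▸ norm_nonneg _

lemma smul_mem_bohrPoints (hlam : 0 ≤ lam) (hp : 0 ≤ p) {t : ℝ} {ζ : Fin n → ℂ}
    (ht : MapsTo (t • ·) Ω₂ Ω₁) (hζ : ζ ∈ bohrPoints Ω₂ p lam U) :
    t • ζ ∈ bohrPoints Ω₁ p lam U := by
  have hconst : ∀ w : Fin n → ℂ, (fun _ => (t : ℂ)) * w = t • w := fun w => by
    ext i; simp [Complex.real_smul]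
  simpa only [hconst] using mul_mem_bohrPoints hlam hp (c := fun _ => (t : ℂ))
    (by simpa only [hconst] using ht) hζ

lemma smul_subset_bohrPoints_of_polydisc (hlam : 0 ≤ lam) (hp : 0 ≤ p)
    (hΩ : IsCompleteReinhardt Ω) {r : ℝ}
    (hr : r • ball 0 1 ⊆ bohrPoints (ball (0 : Fin n → ℂ) 1) p lam U) :
    r • Ω ⊆ bohrPoints Ω p lam U := by
  refine smul_set_subset_iff.2 fun z hz => ?_
  obtain ⟨t, ht1, htz⟩ := hΩ.1.exists_one_lt_smul_mem hz
  have hw : (t⁻¹ • 1 : Fin n → ℂ) ∈ ball 0 1 := by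
    rw [mem_ball_zero_iff, pi_norm_lt_iff one_pos]
    intro i
    simp [abs_of_pos (zero_lt_one.trans ht1), inv_lt_one_of_one_lt₀ ht1]
  convert mul_mem_bohrPoints hlam hp (hΩ.mapsTo_mul_ball htz) (hr (smul_mem_smul_set hw))
    using 1
  have ht0 : (t : ℂ) ≠ 0 := by exact_mod_cast (zero_lt_one.trans ht1).ne'
  ext i
  simp only [Pi.smul_apply, Complex.real_smul, Pi.mul_apply, Pi.one_apply, Complex.ofReal_inv,
    mul_one]
  field_simp

lemma smul_polydisc_subset_bohrPoints (hlam : 0 ≤ lam) (hp : 0 ≤ p) {ε s r : ℝ}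
    (hε : 0 < ε) (hs : 0 < s) (hεΩ : ball 0 ε ⊆ Ω) (hΩs : Ω ⊆ ball 0 s)
    (hr : r • Ω ⊆ bohrPoints Ω p lam U) :
    (ε / s * r) • ball 0 1 ⊆ bohrPoints (ball (0 : Fin n → ℂ) 1) p lam U := by
  have hΩs' : MapsTo (s⁻¹ • ·) Ω (ball 0 1) := fun w hw =>
    (mem_smul_set_iff_inv_smul_mem₀ hs.ne' _ _).1 (by rw [smul_unitBall_of_pos hs]; exact hΩs hw)
  refine smul_set_subset_iff.2 fun ζ hζ => ?_
  have hεζ : ε • ζ ∈ Ω := hεΩ (by rw [← smul_unitBall_of_pos hε]; exact smul_mem_smul_set hζ)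
  convert smul_mem_bohrPoints hlam hp hΩs' (hr (smul_mem_smul_set hεζ)) using 1
  simp only [smul_smul]
  congr 1
  ring

end BohrPoints

theorem bohrR_ge_polydisc_general
    {H : Type*} [NormedAddCommGroup H] [InnerProductSpace ℂ H] [CompleteSpace H]
    {Y : Type*} [NormedAddCommGroup Y] [NormedSpace ℂ Y]
    (U : (H →L[ℂ] H) →L[ℂ] Y) (p lam : ℝ) (hp : 1 ≤ p) (hU : ‖U‖ ≤ lam)
    (n : ℕ) (Ω : Set (Fin n → ℂ))
    (hΩ : IsCompleteReinhardt Ω) (hb : Bornology.IsBounded Ω) :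
    bohrR Ω p lam U ≥ bohrR (lqBall n ∞) p lam U := by
  have hlam : 0 ≤ lam := (norm_nonneg U).trans hU
  have hp0 : 0 ≤ p := zero_le_one.trans hp
  obtain ⟨ε, hε, hεΩ⟩ := isOpen_iff.mp hΩ.1 0 hΩ.2.2.1
  obtain ⟨s, hs, hΩs⟩ := hb.subset_ball_lt 0 0
  rw [ge_iff_le, bohrR_eq_sSup, bohrR_eq_sSup, lqBall_top]
  refine Real.sSup_le_sSup_of_subset (fun r hr => hr.1) ?_ ?_
  · exact fun r ⟨hr0, hr⟩ => ⟨hr0, smul_subset_bohrPoints_of_polydisc hlam hp0 hΩ hr⟩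
  · rintro ⟨M, hM⟩
    refine ⟨s / ε * M, fun r ⟨hr0, hr⟩ => ?_⟩
    have hscaled : ε / s * r ≤ M :=
      hM ⟨by positivity, smul_polydisc_subset_bohrPoints hlam hp0 hε hs hεΩ hΩs hr⟩
    calc r = s / ε * (ε / s * r) := by field_simp
      _ ≤ s / ε * M := by gcongr

/-- Lemma 3.6: the Bohr radius of the polydisc is a universal
lower bound for the Bohr radius of every bounded simply connected complete
Reinhardt domain. -/
theorem bohrR_ge_polydisc
    {H : Type*} [NormedAddCommGroup H] [InnerProductSpace ℂ H] [CompleteSpace H]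
    {Y : Type*} [NormedAddCommGroup Y] [NormedSpace ℂ Y]
    (U : (H →L[ℂ] H) →L[ℂ] Y) (p lam : ℝ) (hp : 1 ≤ p) (hU : ‖U‖ ≤ lam)
    (n : ℕ) (Ω : Set (Fin n → ℂ))
    (hΩ : IsCompleteReinhardt Ω) (hb : Bornology.IsBounded Ω)
    (hsc : SimplyConnectedSpace ↥Ω) :
    bohrR Ω p lam U ≥ bohrR (lqBall n ∞) p lam U :=
  bohrR_ge_polydisc_general U p lam hp hU n Ω hΩ hb
end
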